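/- Theorem 2 (sufficient condition for the ellipsoidal safe set): in the setting of Proposition 2, define the element-wise worst-case CVaR vector c ∈ ℝ^m with c_i = sup_{ℙ∈𝒫(0,blkdiag(P,Q))} ℙ-CVaR_ε[ ([AᵀEB; EB]ᵀ ξ)_i ], and r̃ = sup_{ℙ∈𝒫(0,blkdiag(P,Q))} ℙ-CVaR_ε[ ξᵀP̄ξ + 2q̄₁ᵀξ ] + (Ax̄ − x_c)ᵀE(Ax̄ − x_c) − α(x̄ − x_c)ᵀE(x̄ − x_c) − (1−α)r. If there exists v ∈ ℝ^m such that u ≤ v, −u ≤ v (element-wise), and uᵀBᵀEBu + 2(Ax̄ − x_c)ᵀEBu + 2cᵀv + r̃ ≤ 0, then the risk constraint sup_{ℙ∈𝒫(0,blkdiag(P,Q))} ℙ-CVaR_ε[ −h(A(x̄+ξ₁) + Bu + ξ₂) + α·h(x̄+ξ₁) ] ≤ 0 holds. -/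

import Mathlib

open MeasureTheory Matrix

/-- Conditional value-at-risk at level `ε` of loss `L` under measure `ℙ`. -/
noncomputable def CVaR {ι : Type*} [Fintype ι] (ε : ℝ)
    (ℙ : Measure (ι → ℝ)) (L : (ι → ℝ) → ℝ) : ℝ :=
  ⨅ β : ℝ, (β + (1 / ε) * ∫ ξ, max (L ξ - β) 0 ∂ℙ)

/-- The set `𝒫(μ, S)` of probability measures on `ι → ℝ` with finite second
moments, mean `μ` and covariance `S`. -/
def MomentSet {ι : Type*} [Fintype ι] (μ : ι → ℝ) (S : Matrix ι ι ℝ) :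
    Set (Measure (ι → ℝ)) :=
  {ℙ | IsProbabilityMeasure ℙ ∧
    (∀ i, Integrable (fun ξ => ξ i) ℙ) ∧
    (∀ i j, Integrable (fun ξ => ξ i * ξ j) ℙ) ∧
    (∀ i, ∫ ξ, ξ i ∂ℙ = μ i) ∧
    (∀ i j, ∫ ξ, (ξ i - μ i) * (ξ j - μ j) ∂ℙ = S i j)}

/-- Worst-case CVaR over `𝒫(μ, S)`. -/
noncomputable def wcCVaR {ι : Type*} [Fintype ι] (ε : ℝ) (μ : ι → ℝ)
    (S : Matrix ι ι ℝ) (L : (ι → ℝ) → ℝ) : ℝ :=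
  sSup ((fun ℙ => CVaR ε ℙ L) '' MomentSet μ S)

section toolbox
set_option linter.unusedSectionVars false
variable {ι : Type*} [Fintype ι] {ε : ℝ} {ℙ : Measure (ι → ℝ)} {L f g : (ι → ℝ) → ℝ}

lemma meas_lin (q : ι → ℝ) : Measurable (fun ξ : ι → ℝ => q ⬝ᵥ ξ) := by
  simp only [dotProduct]
  exact Finset.measurable_sum _ fun i _ => by fun_prop

lemma int_lin (hm : ∀ i, Integrable (fun ξ => ξ i) ℙ) (q : ι → ℝ) :
    Integrable (fun ξ : ι → ℝ => q ⬝ᵥ ξ) ℙ := by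
  simp only [dotProduct]
  exact integrable_finset_sum _ fun i _ => ((hm i).const_mul (q i))

lemma int_quad (hm2 : ∀ i j, Integrable (fun ξ => ξ i * ξ j) ℙ) (M : Matrix ι ι ℝ) :
    Integrable (fun ξ : ι → ℝ => ξ ⬝ᵥ (M *ᵥ ξ)) ℙ := by
  have h : (fun ξ : ι → ℝ => ξ ⬝ᵥ (M *ᵥ ξ)) = fun ξ => ∑ i, ∑ j, M i j * (ξ i * ξ j) := by
    funext ξ
    simp only [dotProduct, mulVec, Finset.mul_sum]
    exact Finset.sum_congr rfl fun i _ => Finset.sum_congr rfl fun j _ => by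
      ring
  rw [h]
  exact integrable_finset_sum _ fun i _ => integrable_finset_sum _ fun j _ =>
    ((hm2 i j).const_mul (M i j))


lemma intPos [IsProbabilityMeasure ℙ] (hL : Integrable L ℙ) (β : ℝ) :
    Integrable (fun ξ => max (L ξ - β) 0) ℙ := (hL.sub (integrable_const β)).pos_part

lemma F_ge (hε : ε ∈ Set.Ioo (0:ℝ) 1) [IsProbabilityMeasure ℙ] (hL : Integrable L ℙ) (β : ℝ) :
    ∫ ξ, L ξ ∂ℙ ≤ β + (1 / ε) * ∫ ξ, max (L ξ - β) 0 ∂ℙ := by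
  have h0 : 0 ≤ ∫ ξ, max (L ξ - β) 0 ∂ℙ :=
    integral_nonneg fun ξ => le_max_right _ _
  have h1 : (1:ℝ) ≤ 1 / ε := by
    rw [le_div_iff₀ hε.1]; linarith [hε.2.le]
  have h2 : ∫ ξ, L ξ ∂ℙ - β ≤ ∫ ξ, max (L ξ - β) 0 ∂ℙ := by
    have := integral_mono (hL.sub (integrable_const β)) (intPos hL β)
      (fun ξ => le_max_left _ _)
    simpa [integral_sub hL (integrable_const β)] using this
  nlinarith

lemma bddBelow_F (hε : ε ∈ Set.Ioo (0:ℝ) 1) [IsProbabilityMeasure ℙ] (hL : Integrable L ℙ) :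
    BddBelow (Set.range fun β : ℝ => β + (1 / ε) * ∫ ξ, max (L ξ - β) 0 ∂ℙ) :=
  ⟨∫ ξ, L ξ ∂ℙ, by rintro x ⟨β, rfl⟩; exact F_ge hε hL β⟩

lemma cvar_le (hε : ε ∈ Set.Ioo (0:ℝ) 1) [IsProbabilityMeasure ℙ] (hL : Integrable L ℙ) (β : ℝ) :
    CVaR ε ℙ L ≤ β + (1 / ε) * ∫ ξ, max (L ξ - β) 0 ∂ℙ :=
  ciInf_le (bddBelow_F hε hL) β

lemma integral_le_cvar (hε : ε ∈ Set.Ioo (0:ℝ) 1) [IsProbabilityMeasure ℙ] (hL : Integrable L ℙ) :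
    ∫ ξ, L ξ ∂ℙ ≤ CVaR ε ℙ L :=
  le_ciInf (F_ge hε hL)

lemma cvar_mono (hε : ε ∈ Set.Ioo (0:ℝ) 1) [IsProbabilityMeasure ℙ]
    (hf : Integrable f ℙ) (hg : Integrable g ℙ) (h : ∀ ξ, f ξ ≤ g ξ) :
    CVaR ε ℙ f ≤ CVaR ε ℙ g := by
  refine le_ciInf fun β => (cvar_le hε hf β).trans ?_
  have h1 : (0:ℝ) ≤ 1 / ε := div_nonneg zero_le_one hε.1.le
  exact add_le_add le_rfl (mul_le_mul_of_nonneg_left (integral_mono (intPos hf β) (intPos hg β)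
    (fun ξ => max_le_max (by linarith [h ξ]) le_rfl)) h1)

lemma cvar_add_le (hε : ε ∈ Set.Ioo (0:ℝ) 1) [IsProbabilityMeasure ℙ]
    (hf : Integrable f ℙ) (hg : Integrable g ℙ) :
    CVaR ε ℙ (fun ξ => f ξ + g ξ) ≤ CVaR ε ℙ f + CVaR ε ℙ g := by
  have key : ∀ β₁ β₂ : ℝ, CVaR ε ℙ (fun ξ => f ξ + g ξ) ≤
      (β₁ + (1 / ε) * ∫ ξ, max (f ξ - β₁) 0 ∂ℙ)
      + (β₂ + (1 / ε) * ∫ ξ, max (g ξ - β₂) 0 ∂ℙ) := by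
    intro β₁ β₂
    refine (cvar_le hε (L := fun ξ => f ξ + g ξ) (hf.add hg) (β₁ + β₂)).trans ?_
    have hint : ∫ ξ, max (f ξ + g ξ - (β₁ + β₂)) 0 ∂ℙ ≤
        ∫ ξ, (max (f ξ - β₁) 0 + max (g ξ - β₂) 0) ∂ℙ := by
      refine integral_mono (by simpa using intPos (hf.add hg) (β₁ + β₂))
        ((intPos hf β₁).add (intPos hg β₂)) fun ξ => ?_
      have h1 := le_max_left (f ξ - β₁) 0
      have h2 := le_max_right (f ξ - β₁) 0
      have h3 := le_max_left (g ξ - β₂) 0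
      have h4 := le_max_right (g ξ - β₂) 0
      simp only [max_le_iff]
      constructor <;> nlinarith
    rw [integral_add (intPos hf β₁) (intPos hg β₂)] at hint
    have h1 : (0:ℝ) ≤ 1 / ε := div_nonneg zero_le_one hε.1.le
    nlinarith
  have step : ∀ β₁, CVaR ε ℙ (fun ξ => f ξ + g ξ)
      - (β₁ + (1 / ε) * ∫ ξ, max (f ξ - β₁) 0 ∂ℙ) ≤ CVaR ε ℙ g := by
    intro β₁
    refine le_ciInf fun β₂ => ?_
    rw [sub_le_iff_le_add']
    exact key β₁ β₂
  rw [← sub_le_iff_le_add]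
  exact le_ciInf fun β₁ => by
    rw [sub_le_iff_le_add, ← sub_le_iff_le_add']
    exact step β₁

lemma cvar_zero_le (hε : ε ∈ Set.Ioo (0:ℝ) 1) [IsProbabilityMeasure ℙ] :
    CVaR ε ℙ (fun _ => (0:ℝ)) ≤ 0 := by
  have := cvar_le hε (L := fun _ => (0:ℝ)) (ℙ := ℙ) (integrable_const 0) 0
  simpa using this

lemma cvar_const_mul_le (hε : ε ∈ Set.Ioo (0:ℝ) 1) [IsProbabilityMeasure ℙ]
    {t : ℝ} (ht : 0 ≤ t) (hf : Integrable f ℙ) :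
    CVaR ε ℙ (fun ξ => t * f ξ) ≤ t * CVaR ε ℙ f := by
  rcases eq_or_lt_of_le ht with h | h
  · simp only [← h, zero_mul]
    exact cvar_zero_le hε
  · rw [← div_le_iff₀' h]
    refine le_ciInf fun β => ?_
    rw [div_le_iff₀' h]
    have := cvar_le hε (L := fun ξ => t * f ξ) (hf.const_mul t) (t * β)
    refine this.trans (le_of_eq ?_)
    have : ∀ ξ, max (t * f ξ - t * β) 0 = t * max (f ξ - β) 0 := by
      intro ξ
      rw [← mul_sub, mul_max_of_nonneg _ _ h.le, mul_zero]
    simp only [this, integral_const_mul]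
    ring

lemma cvar_add_const_le (hε : ε ∈ Set.Ioo (0:ℝ) 1) [IsProbabilityMeasure ℙ]
    (hf : Integrable f ℙ) (K : ℝ) :
    CVaR ε ℙ (fun ξ => f ξ + K) ≤ CVaR ε ℙ f + K := by
  rw [← sub_le_iff_le_add]
  refine le_ciInf fun β => ?_
  rw [sub_le_iff_le_add]
  have := cvar_le hε (L := fun ξ => f ξ + K) (hf.add (integrable_const K)) (β + K)
  refine this.trans (le_of_eq ?_)
  have : ∀ ξ, max ((fun ξ => f ξ + K) ξ - (β + K)) 0 = max (f ξ - β) 0 := by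
    intro ξ; congr 1; ring
  simp only [this]; ring


-- bounds on moments under a measure in MomentSet 0 S
lemma moment_sq (hℙ : ℙ ∈ MomentSet (0 : ι → ℝ) S) (i j : ι) :
    ∫ ξ, ξ i * ξ j ∂ℙ = S i j := by
  have := hℙ.2.2.2.2 i j
  simpa using this

lemma cvar_quad_bound (hε : ε ∈ Set.Ioo (0:ℝ) 1) {S : Matrix ι ι ℝ}
    (hℙ : ℙ ∈ MomentSet (0 : ι → ℝ) S) (M : Matrix ι ι ℝ) (q : ι → ℝ) :
    CVaR ε ℙ (fun ξ => ξ ⬝ᵥ (M *ᵥ ξ) + 2 * (q ⬝ᵥ ξ)) ≤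
      (1 / ε) * ((∑ i, ∑ j, |M i j| * (S i i + S j j)) + ∑ i, 2 * |q i| * (1 + S i i)) := by
  haveI := hℙ.1
  have hm := hℙ.2.1
  have hm2 := hℙ.2.2.1
  have hLint : Integrable (fun ξ => ξ ⬝ᵥ (M *ᵥ ξ) + 2 * (q ⬝ᵥ ξ)) ℙ :=
    (int_quad hm2 M).add ((int_lin hm q).const_mul 2)
  have hA : ∀ i j : ι, Integrable (fun ξ : ι → ℝ => |M i j| * (ξ i * ξ i + ξ j * ξ j)) ℙ :=
    fun i j => ((hm2 i i).add (hm2 j j)).const_mul _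
  have hA' : ∀ i : ι, Integrable (fun ξ : ι → ℝ => ∑ j, |M i j| * (ξ i * ξ i + ξ j * ξ j)) ℙ :=
    fun i => integrable_finset_sum _ fun j _ => hA i j
  have hA'' : Integrable (fun ξ : ι → ℝ => ∑ i, ∑ j, |M i j| * (ξ i * ξ i + ξ j * ξ j)) ℙ :=
    integrable_finset_sum _ fun i _ => hA' i
  have hB : ∀ i : ι, Integrable (fun ξ : ι → ℝ => 2 * |q i| * (1 + ξ i * ξ i)) ℙ :=
    fun i => ((integrable_const (1:ℝ)).add (hm2 i i)).const_mul _
  have hB' : Integrable (fun ξ : ι → ℝ => ∑ i, 2 * |q i| * (1 + ξ i * ξ i)) ℙ :=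
    integrable_finset_sum _ fun i _ => hB i
  have hG : Integrable (fun ξ : ι → ℝ =>
      (∑ i, ∑ j, |M i j| * (ξ i * ξ i + ξ j * ξ j)) + ∑ i, 2 * |q i| * (1 + ξ i * ξ i)) ℙ :=
    hA''.add hB'
  have h0 := cvar_le hε hLint 0
  refine h0.trans ?_
  rw [zero_add]
  have h1 : (0:ℝ) ≤ 1 / ε := div_nonneg zero_le_one hε.1.le
  gcongr
  have hint : ∫ ξ, max ((fun ξ => ξ ⬝ᵥ (M *ᵥ ξ) + 2 * (q ⬝ᵥ ξ)) ξ - 0) 0 ∂ℙ ≤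
      ∫ ξ, ((∑ i, ∑ j, |M i j| * (ξ i * ξ i + ξ j * ξ j))
        + ∑ i, 2 * |q i| * (1 + ξ i * ξ i)) ∂ℙ := by
    refine integral_mono (intPos hLint 0) hG fun ξ => ?_
    have hterm1 : ξ ⬝ᵥ (M *ᵥ ξ) ≤ ∑ i, ∑ j, |M i j| * (ξ i * ξ i + ξ j * ξ j) := by
      have expand : ξ ⬝ᵥ (M *ᵥ ξ) = ∑ i, ∑ j, M i j * (ξ i * ξ j) := by
        simp only [dotProduct, mulVec, Finset.mul_sum]
        exact Finset.sum_congr rfl fun i _ => Finset.sum_congr rfl fun j _ => by ring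
      rw [expand]
      refine Finset.sum_le_sum fun i _ => Finset.sum_le_sum fun j _ => ?_
      have h1 : M i j * (ξ i * ξ j) ≤ |M i j| * |ξ i * ξ j| := by
        calc M i j * (ξ i * ξ j) ≤ |M i j * (ξ i * ξ j)| := le_abs_self _
        _ = |M i j| * |ξ i * ξ j| := abs_mul _ _
      refine h1.trans ?_
      have h2 : |ξ i * ξ j| ≤ ξ i * ξ i + ξ j * ξ j := by
        rw [abs_mul]
        nlinarith [sq_nonneg (|ξ i| - |ξ j|), sq_abs (ξ i), sq_abs (ξ j),
          abs_nonneg (ξ i), abs_nonneg (ξ j)]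
      exact mul_le_mul_of_nonneg_left h2 (abs_nonneg _)
    have hterm2 : 2 * (q ⬝ᵥ ξ) ≤ ∑ i, 2 * |q i| * (1 + ξ i * ξ i) := by
      rw [dotProduct, Finset.mul_sum]
      refine Finset.sum_le_sum fun i _ => ?_
      have : q i * ξ i ≤ |q i| * (1 + ξ i * ξ i) := by
        calc q i * ξ i ≤ |q i| * |ξ i| := by
              calc q i * ξ i ≤ |q i * ξ i| := le_abs_self _
              _ = |q i| * |ξ i| := abs_mul _ _
        _ ≤ |q i| * (1 + ξ i * ξ i) := by
              refine mul_le_mul_of_nonneg_left ?_ (abs_nonneg _)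
              nlinarith [sq_nonneg (|ξ i| - 1), sq_abs (ξ i), abs_nonneg (ξ i)]
      nlinarith [this]
    have hnn : (0:ℝ) ≤ (∑ i, ∑ j, |M i j| * (ξ i * ξ i + ξ j * ξ j))
        + ∑ i, 2 * |q i| * (1 + ξ i * ξ i) := by
      have := hterm1
      have := hterm2
      have hq : (0:ℝ) ≤ ξ ⬝ᵥ (M *ᵥ ξ) + 2 * (q ⬝ᵥ ξ) ∨ True := Or.inr trivial
      -- nonnegativity: each summand is nonneg
      refine add_nonneg (Finset.sum_nonneg fun i _ => Finset.sum_nonneg fun j _ => ?_)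
        (Finset.sum_nonneg fun i _ => ?_)
      · exact mul_nonneg (abs_nonneg _) (by nlinarith [sq_nonneg (ξ i), sq_nonneg (ξ j)])
      · have := abs_nonneg (q i); nlinarith [sq_nonneg (ξ i)]
    simp only [sub_zero, max_le_iff]
    exact ⟨by linarith, hnn⟩
  refine hint.trans (le_of_eq ?_)
  rw [integral_add hA'' hB', integral_finset_sum _ (fun i _ => hA' i),
    integral_finset_sum _ (fun i _ => hB i)]
  congr 1
  · refine Finset.sum_congr rfl fun i _ => ?_
    rw [integral_finset_sum _ (fun j _ => hA i j)]
    refine Finset.sum_congr rfl fun j _ => ?_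
    rw [integral_const_mul _ _, integral_add (hm2 i i) (hm2 j j), moment_sq hℙ, moment_sq hℙ]
  · refine Finset.sum_congr rfl fun i _ => ?_
    rw [integral_const_mul _ _, integral_add (integrable_const _) (hm2 i i), moment_sq hℙ]
    simp

lemma cvar_lin_bound (hε : ε ∈ Set.Ioo (0:ℝ) 1) {S : Matrix ι ι ℝ}
    (hℙ : ℙ ∈ MomentSet (0 : ι → ℝ) S) (q : ι → ℝ) :
    CVaR ε ℙ (fun ξ => q ⬝ᵥ ξ) ≤ (1 / ε) * ∑ i, |q i| * (1 + S i i) := by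
  haveI := hℙ.1
  have hm := hℙ.2.1
  have hm2 := hℙ.2.2.1
  have hLint : Integrable (fun ξ : ι → ℝ => q ⬝ᵥ ξ) ℙ := int_lin hm q
  have hB : ∀ i : ι, Integrable (fun ξ : ι → ℝ => |q i| * (1 + ξ i * ξ i)) ℙ :=
    fun i => ((integrable_const (1:ℝ)).add (hm2 i i)).const_mul _
  have hGint : Integrable (fun ξ : ι → ℝ => ∑ i, |q i| * (1 + ξ i * ξ i)) ℙ :=
    integrable_finset_sum _ fun i _ => hB i
  refine (cvar_le hε hLint 0).trans ?_
  rw [zero_add]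
  have h1 : (0:ℝ) ≤ 1 / ε := div_nonneg zero_le_one hε.1.le
  gcongr
  have hint : ∫ ξ, max ((fun ξ : ι → ℝ => q ⬝ᵥ ξ) ξ - 0) 0 ∂ℙ ≤
      ∫ ξ, (∑ i, |q i| * (1 + ξ i * ξ i)) ∂ℙ := by
    refine integral_mono (intPos hLint 0) hGint fun ξ => ?_
    have hterm : q ⬝ᵥ ξ ≤ ∑ i, |q i| * (1 + ξ i * ξ i) := by
      rw [dotProduct]
      refine Finset.sum_le_sum fun i _ => ?_
      calc q i * ξ i ≤ |q i| * |ξ i| := by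
            calc q i * ξ i ≤ |q i * ξ i| := le_abs_self _
            _ = |q i| * |ξ i| := abs_mul _ _
      _ ≤ |q i| * (1 + ξ i * ξ i) := by
            refine mul_le_mul_of_nonneg_left ?_ (abs_nonneg _)
            nlinarith [sq_nonneg (|ξ i| - 1), sq_abs (ξ i), abs_nonneg (ξ i)]
    have hnn : (0:ℝ) ≤ ∑ i, |q i| * (1 + ξ i * ξ i) :=
      Finset.sum_nonneg fun i _ => mul_nonneg (abs_nonneg _) (by nlinarith [sq_nonneg (ξ i)])
    simp only [sub_zero, max_le_iff]
    exact ⟨hterm, hnn⟩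
  refine hint.trans (le_of_eq ?_)
  rw [integral_finset_sum _ (fun i _ => hB i)]
  refine Finset.sum_congr rfl fun i _ => ?_
  rw [integral_const_mul _ _, integral_add (integrable_const _) (hm2 i i), moment_sq hℙ]
  simp

lemma bddAbove_quad (hε : ε ∈ Set.Ioo (0:ℝ) 1) (S M : Matrix ι ι ℝ) (q : ι → ℝ) :
    BddAbove ((fun ℙ => CVaR ε ℙ (fun ξ => ξ ⬝ᵥ (M *ᵥ ξ) + 2 * (q ⬝ᵥ ξ))) ''
      MomentSet (0 : ι → ℝ) S) := by
  refine ⟨(1 / ε) * ((∑ i, ∑ j, |M i j| * (S i i + S j j)) + ∑ i, 2 * |q i| * (1 + S i i)), ?_⟩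
  rintro x ⟨ℙ', hℙ', rfl⟩
  exact cvar_quad_bound hε hℙ' M q

lemma bddAbove_lin (hε : ε ∈ Set.Ioo (0:ℝ) 1) (S : Matrix ι ι ℝ) (q : ι → ℝ) :
    BddAbove ((fun ℙ => CVaR ε ℙ (fun ξ => q ⬝ᵥ ξ)) '' MomentSet (0 : ι → ℝ) S) := by
  refine ⟨(1 / ε) * ∑ i, |q i| * (1 + S i i), ?_⟩
  rintro x ⟨ℙ', hℙ', rfl⟩
  exact cvar_lin_bound hε hℙ' q

lemma map_neg_mem' {S : Matrix ι ι ℝ} (hℙ : ℙ ∈ MomentSet (0 : ι → ℝ) S) :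
    Measure.map (fun ξ : ι → ℝ => -ξ) ℙ ∈ MomentSet (0 : ι → ℝ) S := by
  haveI := hℙ.1
  have hmeas : Measurable (fun ξ : ι → ℝ => -ξ) := measurable_neg
  refine ⟨Measure.isProbabilityMeasure_map hmeas.aemeasurable, fun i => ?_, fun i j => ?_,
    fun i => ?_, fun i j => ?_⟩
  · rw [integrable_map_measure (measurable_pi_apply i).aestronglyMeasurable hmeas.aemeasurable]
    have h : ((fun ξ : ι → ℝ => ξ i) ∘ fun ξ => -ξ) = fun ξ => -(ξ i) := rfl
    rw [h]; exact (hℙ.2.1 i).neg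
  · rw [integrable_map_measure (g := fun ξ : ι → ℝ => ξ i * ξ j)
      (((measurable_pi_apply i).mul (measurable_pi_apply j)).aestronglyMeasurable)
      hmeas.aemeasurable]
    have h : ((fun ξ : ι → ℝ => ξ i * ξ j) ∘ fun ξ => -ξ) = fun ξ => ξ i * ξ j := by
      funext ξ; simp
    rw [h]; exact hℙ.2.2.1 i j
  · rw [integral_map hmeas.aemeasurable (measurable_pi_apply i).aestronglyMeasurable]
    have h : ∫ ξ, (-ξ) i ∂ℙ = - ∫ ξ, ξ i ∂ℙ := by
      rw [← integral_neg]; rfl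
    rw [h, hℙ.2.2.2.1 i]; simp
  · rw [integral_map hmeas.aemeasurable
      (f := fun ξ : ι → ℝ => (ξ i - (0:ι→ℝ) i) * (ξ j - (0:ι→ℝ) j))
      (((measurable_pi_apply i).sub measurable_const).mul
        ((measurable_pi_apply j).sub measurable_const)).aestronglyMeasurable]
    have h : ∫ ξ, ((-ξ) i - (0:ι→ℝ) i) * ((-ξ) j - (0:ι→ℝ) j) ∂ℙ
        = ∫ ξ, (ξ i - (0:ι→ℝ) i) * (ξ j - (0:ι→ℝ) j) ∂ℙ := by
      refine integral_congr_ae (Filter.Eventually.of_forall fun ξ => ?_)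
      simp
    rw [h, hℙ.2.2.2.2 i j]

lemma cvar_map_neg (q : ι → ℝ) :
    CVaR ε (Measure.map (fun ξ : ι → ℝ => -ξ) ℙ) (fun ξ => q ⬝ᵥ ξ)
      = CVaR ε ℙ (fun ξ => -(q ⬝ᵥ ξ)) := by
  unfold CVaR
  refine iInf_congr fun β => ?_
  congr 1
  congr 1
  rw [integral_map (φ := fun ξ : ι → ℝ => -ξ) measurable_neg.aemeasurable
    (f := fun ξ => max ((fun ξ => q ⬝ᵥ ξ) ξ - β) 0)
    (((meas_lin q).sub measurable_const).max measurable_const).aestronglyMeasurable]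
  refine integral_congr_ae (Filter.Eventually.of_forall fun ξ => ?_)
  simp

lemma cvar_sum_le {κ : Type*} (hε : ε ∈ Set.Ioo (0:ℝ) 1) [IsProbabilityMeasure ℙ]
    (s : Finset κ) (g : κ → (ι → ℝ) → ℝ) (hg : ∀ i ∈ s, Integrable (g i) ℙ) :
    CVaR ε ℙ (fun ξ => ∑ i ∈ s, g i ξ) ≤ ∑ i ∈ s, CVaR ε ℙ (g i) := by
  induction s using Finset.cons_induction with
  | empty => simpa using cvar_zero_le hε
  | cons a s ha ih =>
    have hfun : (fun ξ => ∑ i ∈ Finset.cons a s ha, g i ξ)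
        = fun ξ => g a ξ + ∑ i ∈ s, g i ξ := by
      funext ξ; rw [Finset.sum_cons]
    rw [Finset.sum_cons, hfun]
    refine (cvar_add_le hε (hg a (Finset.mem_cons_self a s))
      (integrable_finset_sum _ fun i hi => hg i (Finset.mem_cons_of_mem hi))).trans ?_
    exact add_le_add le_rfl (ih fun i hi => hg i (Finset.mem_cons_of_mem hi))

lemma integral_lin_zero (hm : ∀ i, Integrable (fun ξ => ξ i) ℙ)
    (hmean : ∀ i, ∫ ξ, ξ i ∂ℙ = 0) (q : ι → ℝ) :
    ∫ ξ, q ⬝ᵥ ξ ∂ℙ = 0 := by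
  simp only [dotProduct]
  rw [integral_finset_sum _ fun i _ => ((hm i).const_mul (q i))]
  simp [integral_const_mul _ _, hmean]

end toolbox

lemma dcomm {n : ℕ} {E : Matrix (Fin n) (Fin n) ℝ} (hE : Eᵀ = E) (x y : Fin n → ℝ) :
    x ⬝ᵥ (E *ᵥ y) = y ⬝ᵥ (E *ᵥ x) := by
  rw [dotProduct_mulVec, ← vecMul_transpose, hE, dotProduct_comm]

lemma key_id {n m : ℕ} (E : Matrix (Fin n) (Fin n) ℝ) (hE : Eᵀ = E)
    (xc xbar : Fin n → ℝ) (r : ℝ)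
    (A : Matrix (Fin n) (Fin n) ℝ) (B : Matrix (Fin n) (Fin m) ℝ)
    (u : Fin m → ℝ) (α : ℝ) (ξ : (Fin n ⊕ Fin n) → ℝ) :
    -(-((A *ᵥ (xbar + (fun i => ξ (Sum.inl i))) + B *ᵥ u +
          (fun i => ξ (Sum.inr i)) - xc) ⬝ᵥ
        (E *ᵥ (A *ᵥ (xbar + (fun i => ξ (Sum.inl i))) + B *ᵥ u +
          (fun i => ξ (Sum.inr i)) - xc))) + r)
      + α * (-((xbar + (fun i => ξ (Sum.inl i)) - xc) ⬝ᵥ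
          (E *ᵥ (xbar + (fun i => ξ (Sum.inl i)) - xc))) + r)
    =
    ((ξ ⬝ᵥ (Matrix.fromBlocks (Aᵀ * E * A - α • E) (Aᵀ * E) (E * A) E *ᵥ ξ)
        + 2 * ((Sum.elim
            (Aᵀ *ᵥ (E *ᵥ (A *ᵥ xbar - xc)) - α • (E *ᵥ (xbar - xc)))
            (E *ᵥ (A *ᵥ xbar - xc))) ⬝ᵥ ξ))
      + ∑ i : Fin m, 2 * u i * ((fun j => Matrix.of (Sum.elim (fun i' => (Aᵀ * E * B) i')
          (fun i' => (E * B) i')) j i) ⬝ᵥ ξ))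
    + ((A *ᵥ xbar - xc) ⬝ᵥ (E *ᵥ (A *ᵥ xbar - xc))
      - α * ((xbar - xc) ⬝ᵥ (E *ᵥ (xbar - xc))) - (1 - α) * r
      + (B *ᵥ u) ⬝ᵥ (E *ᵥ (B *ᵥ u))
      + 2 * ((A *ᵥ xbar - xc) ⬝ᵥ (E *ᵥ (B *ᵥ u)))) := by
  have hAt : ∀ (x z : Fin n → ℝ), x ⬝ᵥ (Aᵀ *ᵥ z) = (A *ᵥ x) ⬝ᵥ z := by
    intro x z; rw [dotProduct_mulVec, vecMul_transpose]
  set ξ₁ : Fin n → ℝ := fun i => ξ (Sum.inl i) with hξ₁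
  set ξ₂ : Fin n → ℝ := fun i => ξ (Sum.inr i) with hξ₂
  have hξ : ξ = Sum.elim ξ₁ ξ₂ := by funext j; cases j <;> rfl
  set a : Fin n → ℝ := A *ᵥ xbar - xc with ha
  set s : Fin n → ℝ := xbar - xc with hs
  set p : Fin n → ℝ := A *ᵥ ξ₁ with hp
  set bu : Fin n → ℝ := B *ᵥ u with hbu
  have hy : A *ᵥ (xbar + ξ₁) + B *ᵥ u + ξ₂ - xc = a + (p + (ξ₂ + bu)) := by
    rw [mulVec_add]; simp only [ha, hp, hbu]; abel
  have hz : xbar + ξ₁ - xc = s + ξ₁ := by rw [hs]; abel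
  have hr : ∀ x y z : Fin n → ℝ, x ⬝ᵥ (E *ᵥ (y + z)) = x ⬝ᵥ (E *ᵥ y) + x ⬝ᵥ (E *ᵥ z) := by
    intro x y z; rw [mulVec_add, dotProduct_add]
  have hQ : ∀ x y : Fin n → ℝ, (x + y) ⬝ᵥ (E *ᵥ (x + y)) =
      x ⬝ᵥ (E *ᵥ x) + 2 * (x ⬝ᵥ (E *ᵥ y)) + y ⬝ᵥ (E *ᵥ y) := by
    intro x y
    rw [mulVec_add, dotProduct_add, add_dotProduct, add_dotProduct, dcomm hE y x]
    ring
  -- expand LHS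
  rw [hy, hz, hQ, hQ, hr, hr, hQ, hr, hQ]
  -- linear-in-u sum
  have hsum : ∑ i : Fin m, 2 * u i * ((fun j => Matrix.of (Sum.elim (fun i' => (Aᵀ * E * B) i')
      (fun i' => (E * B) i')) j i) ⬝ᵥ ξ) = 2 * (p ⬝ᵥ (E *ᵥ bu) + ξ₂ ⬝ᵥ (E *ᵥ bu)) := by
    have h1 : ∀ i : Fin m, ((fun j => Matrix.of (Sum.elim (fun i' => (Aᵀ * E * B) i')
        (fun i' => (E * B) i')) j i) ⬝ᵥ ξ)
        = ((Aᵀ * E * B)ᵀ *ᵥ ξ₁) i + ((E * B)ᵀ *ᵥ ξ₂) i := by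
      intro i
      simp only [dotProduct, hξ, Fintype.sum_sum_type, Sum.elim_inl, Sum.elim_inr,
        Matrix.of_apply, mulVec, dotProduct, transpose_apply]

    have h2 : ∑ i : Fin m, 2 * u i * ((fun j => Matrix.of (Sum.elim (fun i' => (Aᵀ * E * B) i')
        (fun i' => (E * B) i')) j i) ⬝ᵥ ξ)
        = 2 * (((Aᵀ * E * B)ᵀ *ᵥ ξ₁) ⬝ᵥ u + ((E * B)ᵀ *ᵥ ξ₂) ⬝ᵥ u) :=
      calc ∑ i : Fin m, 2 * u i * ((fun j => Matrix.of (Sum.elim (fun i' => (Aᵀ * E * B) i')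
            (fun i' => (E * B) i')) j i) ⬝ᵥ ξ)
          = ∑ i : Fin m, 2 * u i * (((Aᵀ * E * B)ᵀ *ᵥ ξ₁) i + ((E * B)ᵀ *ᵥ ξ₂) i) :=
            Finset.sum_congr rfl fun i _ => by rw [h1 i]
        _ = 2 * (((Aᵀ * E * B)ᵀ *ᵥ ξ₁) ⬝ᵥ u + ((E * B)ᵀ *ᵥ ξ₂) ⬝ᵥ u) := by
            rw [dotProduct, dotProduct, mul_add, Finset.mul_sum, Finset.mul_sum,
              ← Finset.sum_add_distrib]
            exact Finset.sum_congr rfl fun i _ => by ring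
    rw [h2, mulVec_transpose, mulVec_transpose, ← dotProduct_mulVec, ← dotProduct_mulVec,
      ← mulVec_mulVec, ← mulVec_mulVec, ← mulVec_mulVec, hAt]
  rw [hsum]
  -- quadratic block form
  have hquad : ξ ⬝ᵥ (Matrix.fromBlocks (Aᵀ * E * A - α • E) (Aᵀ * E) (E * A) E *ᵥ ξ)
      = p ⬝ᵥ (E *ᵥ p) - α * (ξ₁ ⬝ᵥ (E *ᵥ ξ₁)) + 2 * (p ⬝ᵥ (E *ᵥ ξ₂)) + ξ₂ ⬝ᵥ (E *ᵥ ξ₂) := by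
    rw [hξ]
    rw [fromBlocks_mulVec]
    simp only [Sum.elim_comp_inl, Sum.elim_comp_inr]
    rw [sumElim_dotProduct_sumElim]
    rw [dotProduct_add, dotProduct_add, sub_mulVec, dotProduct_sub, smul_mulVec,
      dotProduct_smul, smul_eq_mul]
    rw [← mulVec_mulVec, ← mulVec_mulVec, hAt, ← mulVec_mulVec, hAt, ← mulVec_mulVec,
      dcomm hE ξ₂ (A *ᵥ ξ₁)]
    rw [← hp]
    ring
  rw [hquad]
  -- linear block form
  have hlin : (Sum.elim (Aᵀ *ᵥ (E *ᵥ a) - α • (E *ᵥ s)) (E *ᵥ a)) ⬝ᵥ ξ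
      = a ⬝ᵥ (E *ᵥ p) - α * (s ⬝ᵥ (E *ᵥ ξ₁)) + a ⬝ᵥ (E *ᵥ ξ₂) := by
    rw [hξ, sumElim_dotProduct_sumElim, sub_dotProduct, smul_dotProduct, smul_eq_mul]
    rw [dotProduct_comm (Aᵀ *ᵥ (E *ᵥ a)) ξ₁, hAt, dcomm hE (A *ᵥ ξ₁) a, ← hp,
      dotProduct_comm (E *ᵥ s) ξ₁, dcomm hE ξ₁ s,
      dotProduct_comm (E *ᵥ a) ξ₂, dcomm hE ξ₂ a]
  rw [hlin]
  ring


/-- Theorem 2 (sufficient condition for the ellipsoidal safe set). -/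
theorem thm2_ellipsoid {n m : ℕ} (E : Matrix (Fin n) (Fin n) ℝ) (hE : E.PosDef)
    (xc : Fin n → ℝ) (r : ℝ)
    (A : Matrix (Fin n) (Fin n) ℝ) (B : Matrix (Fin n) (Fin m) ℝ)
    (u : Fin m → ℝ) (α ε : ℝ)
    (hα : α ∈ Set.Ico (0 : ℝ) 1) (hε : ε ∈ Set.Ioo (0 : ℝ) 1)
    (xbar : Fin n → ℝ) (P Q : Matrix (Fin n) (Fin n) ℝ)
    (hP : P.PosSemidef) (hQ : Q.PosSemidef)
    (c : Fin m → ℝ)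
    (hc : ∀ i : Fin m, c i =
      wcCVaR ε (0 : (Fin n ⊕ Fin n) → ℝ) (Matrix.fromBlocks P 0 0 Q)
        (fun ξ => (ξ ᵥ* Matrix.of (Sum.elim (fun i' => (Aᵀ * E * B) i')
          (fun i' => (E * B) i'))) i))
    (rtil : ℝ)
    (hrtil : rtil =
      wcCVaR ε (0 : (Fin n ⊕ Fin n) → ℝ) (Matrix.fromBlocks P 0 0 Q)
        (fun ξ =>
          ξ ⬝ᵥ (Matrix.fromBlocks (Aᵀ * E * A - α • E) (Aᵀ * E) (E * A) E *ᵥ ξ)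
            + 2 * ((Sum.elim
                (Aᵀ *ᵥ (E *ᵥ (A *ᵥ xbar - xc)) - α • (E *ᵥ (xbar - xc)))
                (E *ᵥ (A *ᵥ xbar - xc))) ⬝ᵥ ξ))
      + (A *ᵥ xbar - xc) ⬝ᵥ (E *ᵥ (A *ᵥ xbar - xc))
      - α * ((xbar - xc) ⬝ᵥ (E *ᵥ (xbar - xc))) - (1 - α) * r)
    (hex : ∃ v : Fin m → ℝ, (∀ i, u i ≤ v i) ∧ (∀ i, -u i ≤ v i) ∧
      (B *ᵥ u) ⬝ᵥ (E *ᵥ (B *ᵥ u)) + 2 * ((A *ᵥ xbar - xc) ⬝ᵥ (E *ᵥ (B *ᵥ u)))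
        + 2 * (c ⬝ᵥ v) + rtil ≤ 0) :
    wcCVaR ε (0 : (Fin n ⊕ Fin n) → ℝ) (Matrix.fromBlocks P 0 0 Q)
        (fun ξ =>
          -(-((A *ᵥ (xbar + (fun i => ξ (Sum.inl i))) + B *ᵥ u +
                (fun i => ξ (Sum.inr i)) - xc) ⬝ᵥ
              (E *ᵥ (A *ᵥ (xbar + (fun i => ξ (Sum.inl i))) + B *ᵥ u +
                (fun i => ξ (Sum.inr i)) - xc))) + r)
            + α * (-((xbar + (fun i => ξ (Sum.inl i)) - xc) ⬝ᵥ
                (E *ᵥ (xbar + (fun i => ξ (Sum.inl i)) - xc))) + r)) ≤ 0 := by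
  obtain ⟨v, hv1, hv2, hineq⟩ := hex
  have hEs : Eᵀ = E := by
    have := hE.1.eq; rwa [conjTranspose_eq_transpose_of_trivial] at this
  unfold wcCVaR
  refine Real.sSup_le ?_ le_rfl
  rintro x ⟨ℙ, hℙ, rfl⟩
  haveI := hℙ.1
  have hm := hℙ.2.1
  have hm2 := hℙ.2.2.1
  have hmean := hℙ.2.2.2.1
  simp only [Pi.zero_apply] at hmean
  -- rewrite the loss using the key algebraic identity
  have hLrw : (fun ξ : (Fin n ⊕ Fin n) → ℝ =>
      -(-((A *ᵥ (xbar + (fun i => ξ (Sum.inl i))) + B *ᵥ u +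
            (fun i => ξ (Sum.inr i)) - xc) ⬝ᵥ
          (E *ᵥ (A *ᵥ (xbar + (fun i => ξ (Sum.inl i))) + B *ᵥ u +
            (fun i => ξ (Sum.inr i)) - xc))) + r)
        + α * (-((xbar + (fun i => ξ (Sum.inl i)) - xc) ⬝ᵥ
            (E *ᵥ (xbar + (fun i => ξ (Sum.inl i)) - xc))) + r))
      = fun ξ =>
      ((ξ ⬝ᵥ (Matrix.fromBlocks (Aᵀ * E * A - α • E) (Aᵀ * E) (E * A) E *ᵥ ξ)
          + 2 * ((Sum.elim
              (Aᵀ *ᵥ (E *ᵥ (A *ᵥ xbar - xc)) - α • (E *ᵥ (xbar - xc)))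
              (E *ᵥ (A *ᵥ xbar - xc))) ⬝ᵥ ξ))
        + ∑ i : Fin m, 2 * u i * ((fun j => Matrix.of (Sum.elim (fun i' => (Aᵀ * E * B) i')
            (fun i' => (E * B) i')) j i) ⬝ᵥ ξ))
      + ((A *ᵥ xbar - xc) ⬝ᵥ (E *ᵥ (A *ᵥ xbar - xc))
        - α * ((xbar - xc) ⬝ᵥ (E *ᵥ (xbar - xc))) - (1 - α) * r
        + (B *ᵥ u) ⬝ᵥ (E *ᵥ (B *ᵥ u))
        + 2 * ((A *ᵥ xbar - xc) ⬝ᵥ (E *ᵥ (B *ᵥ u)))) :=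
    by funext ξ; exact key_id E hEs xc xbar r A B u α ξ
  rw [hLrw]
  -- integrability of the pieces
  have hG0int : Integrable (fun ξ : (Fin n ⊕ Fin n) → ℝ =>
      ξ ⬝ᵥ (Matrix.fromBlocks (Aᵀ * E * A - α • E) (Aᵀ * E) (E * A) E *ᵥ ξ)
        + 2 * ((Sum.elim
            (Aᵀ *ᵥ (E *ᵥ (A *ᵥ xbar - xc)) - α • (E *ᵥ (xbar - xc)))
            (E *ᵥ (A *ᵥ xbar - xc))) ⬝ᵥ ξ)) ℙ :=
    (int_quad hm2 _).add ((int_lin hm _).const_mul 2)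
  have hTiint : ∀ i : Fin m, Integrable (fun ξ : (Fin n ⊕ Fin n) → ℝ =>
      2 * u i * ((fun j => Matrix.of (Sum.elim (fun i' => (Aᵀ * E * B) i')
        (fun i' => (E * B) i')) j i) ⬝ᵥ ξ)) ℙ :=
    fun i => (int_lin hm _).const_mul _
  have hTint : Integrable (fun ξ : (Fin n ⊕ Fin n) → ℝ =>
      ∑ i : Fin m, 2 * u i * ((fun j => Matrix.of (Sum.elim (fun i' => (Aᵀ * E * B) i')
        (fun i' => (E * B) i')) j i) ⬝ᵥ ξ)) ℙ :=
    integrable_finset_sum _ fun i _ => hTiint i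
  -- per-coordinate CVaR bounds
  have hswap : ∀ i : Fin m, (fun ξ : (Fin n ⊕ Fin n) → ℝ =>
      (ξ ᵥ* Matrix.of (Sum.elim (fun i' => (Aᵀ * E * B) i')
        (fun i' => (E * B) i'))) i)
      = fun ξ => (fun j => Matrix.of (Sum.elim (fun i' => (Aᵀ * E * B) i')
        (fun i' => (E * B) i')) j i) ⬝ᵥ ξ := by
    intro i; funext ξ
    simp [Matrix.vecMul, dotProduct, mul_comm]
  have hc' : ∀ i : Fin m, c i = sSup ((fun ℙ => CVaR ε ℙ
      (fun ξ => (fun j => Matrix.of (Sum.elim (fun i' => (Aᵀ * E * B) i')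
        (fun i' => (E * B) i')) j i) ⬝ᵥ ξ)) ''
      MomentSet (0 : (Fin n ⊕ Fin n) → ℝ) (Matrix.fromBlocks P 0 0 Q)) := by
    intro i
    rw [hc i, hswap i, wcCVaR]
  have hciP : ∀ i : Fin m, CVaR ε ℙ (fun ξ => (fun j => Matrix.of
      (Sum.elim (fun i' => (Aᵀ * E * B) i') (fun i' => (E * B) i')) j i) ⬝ᵥ ξ) ≤ c i := by
    intro i
    rw [hc' i]
    exact le_csSup (bddAbove_lin hε _ _) (Set.mem_image_of_mem _ hℙ)
  have hciN : ∀ i : Fin m, CVaR ε ℙ (fun ξ => -((fun j => Matrix.of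
      (Sum.elim (fun i' => (Aᵀ * E * B) i') (fun i' => (E * B) i')) j i) ⬝ᵥ ξ)) ≤ c i := by
    intro i
    rw [← cvar_map_neg, hc' i]
    exact le_csSup (bddAbove_lin hε _ _) (Set.mem_image_of_mem _ (map_neg_mem' hℙ))
  have hc0 : ∀ i : Fin m, 0 ≤ c i := by
    intro i
    refine le_trans ?_ (hciP i)
    rw [← integral_lin_zero hm hmean (fun j => Matrix.of (Sum.elim (fun i' => (Aᵀ * E * B) i')
      (fun i' => (E * B) i')) j i)]
    exact integral_le_cvar hε (int_lin hm _)
  have hterm : ∀ i : Fin m, CVaR ε ℙ (fun ξ : (Fin n ⊕ Fin n) → ℝ =>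
      2 * u i * ((fun j => Matrix.of (Sum.elim (fun i' => (Aᵀ * E * B) i')
        (fun i' => (E * B) i')) j i) ⬝ᵥ ξ)) ≤ 2 * v i * c i := by
    intro i
    rcases le_or_gt 0 (u i) with hu | hu
    · refine (cvar_const_mul_le hε (by linarith) (int_lin hm _)).trans ?_
      have h1 := mul_le_mul_of_nonneg_left (hciP i) (show (0:ℝ) ≤ 2 * u i by linarith)
      have h2 := mul_le_mul_of_nonneg_right (show 2 * u i ≤ 2 * v i by linarith [hv1 i]) (hc0 i)
      linarith
    · have hfun : (fun ξ : (Fin n ⊕ Fin n) → ℝ =>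
          2 * u i * ((fun j => Matrix.of (Sum.elim (fun i' => (Aᵀ * E * B) i')
            (fun i' => (E * B) i')) j i) ⬝ᵥ ξ))
          = fun ξ => 2 * (-u i) * (-((fun j => Matrix.of (Sum.elim (fun i' => (Aᵀ * E * B) i')
            (fun i' => (E * B) i')) j i) ⬝ᵥ ξ)) := by
        funext ξ; ring
      rw [hfun]
      have hni : Integrable (fun ξ : (Fin n ⊕ Fin n) → ℝ =>
          -((fun j => Matrix.of (Sum.elim (fun i' => (Aᵀ * E * B) i')
            (fun i' => (E * B) i')) j i) ⬝ᵥ ξ)) ℙ := (int_lin hm _).neg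
      refine (cvar_const_mul_le hε (by linarith) hni).trans ?_
      have h1 := mul_le_mul_of_nonneg_left (hciN i) (show (0:ℝ) ≤ 2 * (-u i) by linarith)
      have h2 := mul_le_mul_of_nonneg_right (show 2 * (-u i) ≤ 2 * v i by linarith [hv2 i]) (hc0 i)
      linarith
  -- CVaR bound for the quadratic part by the worst case value
  have hW : CVaR ε ℙ (fun ξ : (Fin n ⊕ Fin n) → ℝ =>
      ξ ⬝ᵥ (Matrix.fromBlocks (Aᵀ * E * A - α • E) (Aᵀ * E) (E * A) E *ᵥ ξ)
        + 2 * ((Sum.elim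
            (Aᵀ *ᵥ (E *ᵥ (A *ᵥ xbar - xc)) - α • (E *ᵥ (xbar - xc)))
            (E *ᵥ (A *ᵥ xbar - xc))) ⬝ᵥ ξ))
      ≤ wcCVaR ε (0 : (Fin n ⊕ Fin n) → ℝ) (Matrix.fromBlocks P 0 0 Q)
        (fun ξ =>
          ξ ⬝ᵥ (Matrix.fromBlocks (Aᵀ * E * A - α • E) (Aᵀ * E) (E * A) E *ᵥ ξ)
            + 2 * ((Sum.elim
                (Aᵀ *ᵥ (E *ᵥ (A *ᵥ xbar - xc)) - α • (E *ᵥ (xbar - xc)))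
                (E *ᵥ (A *ᵥ xbar - xc))) ⬝ᵥ ξ)) := by
    rw [wcCVaR]
    exact le_csSup (bddAbove_quad hε _ _ _) (Set.mem_image_of_mem _ hℙ)
  -- assemble
  have hGTint : Integrable (fun ξ : (Fin n ⊕ Fin n) → ℝ =>
      ξ ⬝ᵥ (Matrix.fromBlocks (Aᵀ * E * A - α • E) (Aᵀ * E) (E * A) E *ᵥ ξ)
        + 2 * ((Sum.elim
            (Aᵀ *ᵥ (E *ᵥ (A *ᵥ xbar - xc)) - α • (E *ᵥ (xbar - xc)))
            (E *ᵥ (A *ᵥ xbar - xc))) ⬝ᵥ ξ)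
        + ∑ i : Fin m, 2 * u i * ((fun j => Matrix.of (Sum.elim (fun i' => (Aᵀ * E * B) i')
            (fun i' => (E * B) i')) j i) ⬝ᵥ ξ)) ℙ := hG0int.add hTint
  have step1 := cvar_add_const_le hε hGTint
    ((A *ᵥ xbar - xc) ⬝ᵥ (E *ᵥ (A *ᵥ xbar - xc))
      - α * ((xbar - xc) ⬝ᵥ (E *ᵥ (xbar - xc))) - (1 - α) * r
      + (B *ᵥ u) ⬝ᵥ (E *ᵥ (B *ᵥ u))
      + 2 * ((A *ᵥ xbar - xc) ⬝ᵥ (E *ᵥ (B *ᵥ u))))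
  have step2 := cvar_add_le hε hG0int hTint
  have step3 := cvar_sum_le hε Finset.univ _ (fun i _ => hTiint i)
  have step4 := Finset.sum_le_sum fun i (_ : i ∈ Finset.univ) => hterm i
  have hdot : ∑ i : Fin m, 2 * v i * c i = 2 * (c ⬝ᵥ v) := by
    rw [dotProduct, Finset.mul_sum]
    exact Finset.sum_congr rfl fun i _ => by ring
  rw [hdot] at step4
  rw [hrtil] at hineq
  refine step1.trans ?_
  have hfin := step2.trans (add_le_add le_rfl (step3.trans step4))
  linarith [hW, hfin]
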